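/- Let γ be a closed immersed plane curve of period L that is a shrinker, with signed curvature k and unit normal n. If a ∈ ℝ and Y ∈ ℝ² satisfy a·k(t) + ⟨Y, n(t)⟩ = 0 for all t ∈ ℝ, then a = 0 and Y = 0. In other words, the functions k, n₁, n₂ span a 3-dimensional space of functions on γ. -/

import Mathlib

noncomputable section

open Real MeasureTheory Set Filter RealInnerProductSpace

abbrev Pt : Type := EuclideanSpace ℝ (Fin 2)

def vec2 (a b : ℝ) : Pt := (WithLp.equiv 2 (Fin 2 → ℝ)).symm ![a, b]

/-- A closed immersed plane curve of period `L`. -/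
def IsClosedCurve (L : ℝ) (γ : ℝ → Pt) : Prop :=
  0 < L ∧ ContDiff ℝ (⊤ : ℕ∞) γ ∧ (∀ t, γ (t + L) = γ t) ∧ ∀ t, deriv γ t ≠ 0

/-- The F-functional. -/
def Ffun (L : ℝ) (γ : ℝ → Pt) (x₀ : Pt) (t₀ : ℝ) : ℝ :=
  (4 * π * t₀) ^ (-(1:ℝ)/2) *
    ∫ t in (0:ℝ)..L, Real.exp (-‖γ t - x₀‖ ^ 2 / (4 * t₀)) * ‖deriv γ t‖

/-- The entropy. -/
def entropy (L : ℝ) (γ : ℝ → Pt) : ℝ :=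
  sSup {e : ℝ | ∃ x₀ : Pt, ∃ t₀ : ℝ, 0 < t₀ ∧ e = Ffun L γ x₀ t₀}

def unitTangent (γ : ℝ → Pt) (t : ℝ) : Pt := ‖deriv γ t‖⁻¹ • deriv γ t

def unitNormal (γ : ℝ → Pt) (t : ℝ) : Pt :=
  vec2 (unitTangent γ t 1) (-(unitTangent γ t 0))

def curvature (γ : ℝ → Pt) (t : ℝ) : ℝ :=
  (deriv γ t 0 * deriv (deriv γ) t 1 - deriv γ t 1 * deriv (deriv γ) t 0) / ‖deriv γ t‖ ^ 3

def turningNumber (L : ℝ) (γ : ℝ → Pt) : ℝ :=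
  (1 / (2 * π)) * ∫ t in (0:ℝ)..L, curvature γ t * ‖deriv γ t‖

def IsShrinker (γ : ℝ → Pt) : Prop :=
  ∀ t, curvature γ t = (1/2) * ⟪γ t, unitNormal γ t⟫

/-- The normal perturbation `γ + f n`. -/
def perturb (γ : ℝ → Pt) (f : ℝ → ℝ) : ℝ → Pt :=
  fun t => γ t + f t • unitNormal γ t

/-- Curve shortening flow of period `L` on `[0,T)`. -/
def IsCSF (L T : ℝ) (γ : ℝ → ℝ → Pt) : Prop :=
  0 < T ∧
  ContDiffOn ℝ (⊤ : ℕ∞) (fun p : ℝ × ℝ => γ p.1 p.2) (Set.univ ×ˢ Set.Ico 0 T) ∧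
  (∀ t ∈ Set.Ico (0:ℝ) T, IsClosedCurve L (fun u => γ u t)) ∧
  (∀ u : ℝ, ∀ t ∈ Set.Ico (0:ℝ) T,
    deriv (fun s => γ u s) t =
      curvature (fun v => γ v t) u •
        vec2 (-(unitTangent (fun v => γ v t) u 1)) (unitTangent (fun v => γ v t) u 0))

/-- `sup_u |k(u,t)| → ∞` as `t → T`. -/
def CurvatureBlowsUp (T : ℝ) (γ : ℝ → ℝ → Pt) : Prop :=
  ∀ M : ℝ, ∃ t₁ ∈ Set.Ico (0:ℝ) T, ∀ t ∈ Set.Ico t₁ T, ∃ u : ℝ,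
    M ≤ |curvature (fun v => γ v t) u|

/-- Type I singularity at time `T`. -/
def TypeISingularity (T : ℝ) (γ : ℝ → ℝ → Pt) : Prop :=
  CurvatureBlowsUp T γ ∧
  ∃ C > (0:ℝ), ∀ t ∈ Set.Ico (0:ℝ) T, ∀ u : ℝ,
    |curvature (fun v => γ v t) u| ≤ C / Real.sqrt (T - t)

/-- `f` is an entropy-unstable variation of `γ`. -/
def EntropyUnstableVariation (L : ℝ) (γ : ℝ → Pt) (f : ℝ → ℝ) : Prop :=
  ContDiff ℝ (⊤ : ℕ∞) f ∧ (∀ t, f (t + L) = f t) ∧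
  ∀ y : Pt, ∀ h : ℝ,
    (∀ᶠ ε in nhds (0:ℝ),
      DifferentiableAt ℝ (fun ε' => Ffun L (perturb γ (fun t => ε' * f t)) (ε' • y) (1 + ε' * h)) ε) ∧
    ∃ d < (0:ℝ),
      HasDerivAt (deriv (fun ε' => Ffun L (perturb γ (fun t => ε' * f t)) (ε' • y) (1 + ε' * h))) d 0

/-- The entropy index of `γ`. -/
def entropyIndex (L : ℝ) (γ : ℝ → Pt) : ℕ :=
  sSup {d : ℕ | ∃ V : Submodule ℝ (ℝ → ℝ),
    (∀ f ∈ V, ContDiff ℝ (⊤ : ℕ∞) f ∧ ∀ t, f (t + L) = f t) ∧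
    (∀ f ∈ V, f ≠ 0 → EntropyUnstableVariation L γ f) ∧
    Module.finrank ℝ V = d}

/-- The Morse index of a unit-speed shrinker. -/
def morseIndex (L : ℝ) (γ : ℝ → Pt) : ℕ :=
  sSup {d : ℕ | ∃ V : Submodule ℝ (ℝ → ℝ),
    (∀ f ∈ V, ContDiff ℝ (⊤ : ℕ∞) f ∧ ∀ t, f (t + L) = f t) ∧
    (∀ f ∈ V, f ≠ 0 →
      (∫ s in (0:ℝ)..L,
        ((deriv f s) ^ 2 - (curvature γ s ^ 2 + 1/2) * (f s) ^ 2) *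
          Real.exp (-‖γ s‖ ^ 2 / 4)) < 0) ∧
    Module.finrank ℝ V = d}

/-- The `m`-covered circle of radius `√2`, of period `2√2·π·m`. -/
def mCircle (s : ℝ) : Pt :=
  vec2 (Real.sqrt 2 * Real.cos (s / Real.sqrt 2)) (Real.sqrt 2 * Real.sin (s / Real.sqrt 2))

/-- `‖f‖_{C²} ≤ 1`. -/
def C2BoundedByOne (f : ℝ → ℝ) : Prop :=
  ∀ t, |f t| ≤ 1 ∧ |deriv f t| ≤ 1 ∧ |deriv (deriv f) t| ≤ 1

/-- A sequence of functions converges to `0` in `C^∞` (uniformly with all derivatives). -/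
def TendstoCinfty (f : ℕ → ℝ → ℝ) : Prop :=
  ∀ k : ℕ, ∀ δ > (0:ℝ), ∃ N : ℕ, ∀ i ≥ N, ∀ t : ℝ, |iteratedDeriv k (f i) t| ≤ δ
lemma shrinker_aux (A R v0 v1 w0 w1 B0 B1 : ℝ) (hR : R ≠ 0) (h2 : R ^ 2 = v0 ^ 2 + v1 ^ 2)
    (hk : B0 * v1 = B1 * v0) :
    A * R = ((A * v0 * v0 + B0 * w0 + (A * v1 * v1 + B1 * w1)) * R -
        (B0 * v0 + B1 * v1) * ((((2:ℕ) : ℝ) * v0 ^ 1 * w0 + ((2:ℕ) : ℝ) * v1 ^ 1 * w1) / (2 * R))) /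
      R ^ 2 := by
  push_cast
  field_simp
  linear_combination (A*R^2 - B0*w0 - B1*w1) * h2 + (v0*w1 - v1*w0) * hk

lemma vec2_apply0 (a b : ℝ) : vec2 a b 0 = a := rfl

lemma vec2_apply1 (a b : ℝ) : vec2 a b 1 = b := rfl

/-- for a closed plane shrinker, the functions `k, n₁, n₂` are linearly
independent: if `a·k(t) + ⟨Y, n(t)⟩ = 0` for all `t`, then `a = 0` and `Y = 0`. -/
theorem k_and_normal_components_linearly_independent (L : ℝ) (γ : ℝ → Pt)
    (hγ : IsClosedCurve L γ) (hs : IsShrinker γ) (a : ℝ) (Y : Pt)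
    (h : ∀ t : ℝ, a * curvature γ t + ⟪Y, unitNormal γ t⟫ = 0) :
    a = 0 ∧ Y = 0 := by
  obtain ⟨hL, hsm, hper, hne⟩ := hγ
  have hsm2 : ContDiff ℝ (⊤ : ℕ∞) γ := hsm.of_le (by simp)
  have hdγ : Differentiable ℝ γ := (contDiff_infty_iff_deriv.mp hsm2).1
  have hdv : Differentiable ℝ (deriv γ) :=
    (contDiff_infty_iff_deriv.mp hsm2).2.differentiable (by simp)
  have hγi : ∀ (i : Fin 2) (t : ℝ), HasDerivAt (fun s => γ s i) (deriv γ t i) t := by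
    intro i t
    exact (EuclideanSpace.proj (𝕜 := ℝ) i).hasFDerivAt.comp_hasDerivAt t (hdγ t).hasDerivAt
  have hvi : ∀ (i : Fin 2) (t : ℝ), HasDerivAt (fun s => deriv γ s i) (deriv (deriv γ) t i) t := by
    intro i t
    exact (EuclideanSpace.proj (𝕜 := ℝ) i).hasFDerivAt.comp_hasDerivAt t (hdv t).hasDerivAt
  have hr_pos : ∀ t, 0 < ‖deriv γ t‖ := fun t => norm_pos_iff.mpr (hne t)
  have hnorm : ∀ t, ‖deriv γ t‖ = Real.sqrt (deriv γ t 0 ^ 2 + deriv γ t 1 ^ 2) := by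
    intro t
    rw [EuclideanSpace.norm_eq]
    simp [Fin.sum_univ_two, Real.norm_eq_abs, sq_abs]
  have hq_pos : ∀ t, 0 < deriv γ t 0 ^ 2 + deriv γ t 1 ^ 2 := by
    intro t
    have h1 := hr_pos t
    rw [hnorm t] at h1
    nlinarith [Real.sq_sqrt (by positivity : (0:ℝ) ≤ deriv γ t 0 ^ 2 + deriv γ t 1 ^ 2),
      Real.sqrt_nonneg (deriv γ t 0 ^ 2 + deriv γ t 1 ^ 2)]
  have hn0 : ∀ t, unitNormal γ t 0 = ‖deriv γ t‖⁻¹ * deriv γ t 1 := by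
    intro t
    simp only [unitNormal, vec2_apply0, unitTangent]
    simp
  have hn1 : ∀ t, unitNormal γ t 1 = -(‖deriv γ t‖⁻¹ * deriv γ t 0) := by
    intro t
    simp only [unitNormal, vec2_apply1, unitTangent]
    simp
  have key : ∀ t, (a / 2 * γ t 0 + Y 0) * deriv γ t 1 = (a / 2 * γ t 1 + Y 1) * deriv γ t 0 := by
    intro t
    have h1 := h t
    have hRne : ‖deriv γ t‖ ≠ 0 := (hr_pos t).ne'
    rw [hs t, PiLp.inner_apply, PiLp.inner_apply, Fin.sum_univ_two, Fin.sum_univ_two] at h1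
    simp only [RCLike.inner_apply, conj_trivial, hn0, hn1] at h1
    field_simp at h1
    have h2R : (2:ℝ) * ‖deriv γ t‖ ≠ 0 := by positivity
    apply mul_right_cancel₀ h2R
    linear_combination ‖deriv γ t‖ * h1
  -- periodicity of the derivative
  have hγL : γ L = γ 0 := by simpa using hper 0
  have hvper : ∀ t, deriv γ (t + L) = deriv γ t := by
    intro t
    have h2 : deriv (fun s => γ (s + L)) t = deriv γ (t + L) := deriv_comp_add_const γ L t
    rw [show (fun s => γ (s + L)) = γ from funext hper] at h2
    exact h2.symm
  have hvL : deriv γ L = deriv γ 0 := by simpa using hvper 0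
  -- Step 1 : a = 0
  set W0 : ℝ → ℝ := fun t => a / 2 * γ t 0 + Y 0 with hW0_def
  set W1 : ℝ → ℝ := fun t => a / 2 * γ t 1 + Y 1 with hW1_def
  set r : ℝ → ℝ := fun t => Real.sqrt (deriv γ t 0 ^ 2 + deriv γ t 1 ^ 2) with hr_def
  have hrpos : ∀ t, 0 < r t := fun t => Real.sqrt_pos.mpr (hq_pos t)
  set Lam : ℝ → ℝ := fun t => (W0 t * deriv γ t 0 + W1 t * deriv γ t 1) / r t with hLam_def
  have hLam : ∀ t, HasDerivAt Lam (a / 2 * r t) t := by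
    intro t
    have hRne : r t ≠ 0 := (hrpos t).ne'
    have hR2 : r t ^ 2 = deriv γ t 0 ^ 2 + deriv γ t 1 ^ 2 := Real.sq_sqrt (hq_pos t).le
    have hW0' : HasDerivAt W0 (a / 2 * deriv γ t 0) t :=
      (HasDerivAt.const_mul (a / 2) (hγi 0 t)).add_const (Y 0)
    have hW1' : HasDerivAt W1 (a / 2 * deriv γ t 1) t :=
      (HasDerivAt.const_mul (a / 2) (hγi 1 t)).add_const (Y 1)
    have hP : HasDerivAt (fun s => W0 s * deriv γ s 0 + W1 s * deriv γ s 1)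
        (a / 2 * deriv γ t 0 * deriv γ t 0 + W0 t * deriv (deriv γ) t 0 +
         (a / 2 * deriv γ t 1 * deriv γ t 1 + W1 t * deriv (deriv γ) t 1)) t :=
      (hW0'.mul (hvi 0 t)).add (hW1'.mul (hvi 1 t))
    have hq := ((hvi 0 t).pow 2).add ((hvi 1 t).pow 2)
    have hrd := hq.sqrt (hq_pos t).ne'
    have heq := shrinker_aux (a / 2) (r t) (deriv γ t 0) (deriv γ t 1)
      (deriv (deriv γ) t 0) (deriv (deriv γ) t 1) (W0 t) (W1 t) hRne hR2 (key t)
    show HasDerivAt Lam (a / 2 * r t) t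
    rw [heq]
    exact hP.div hrd hRne
  -- Rolle
  have hLamper : Lam 0 = Lam L := by
    simp only [hLam_def, hW0_def, hW1_def, hr_def, hγL, hvL]
  obtain ⟨c, _, hc⟩ := exists_deriv_eq_zero hL
    (fun t _ => (hLam t).differentiableAt.continuousAt.continuousWithinAt) hLamper
  rw [(hLam c).deriv] at hc
  have ha : a = 0 := by
    rcases mul_eq_zero.mp hc with h' | h'
    · linarith
    · exact absurd h' (hrpos c).ne'
  refine ⟨ha, ?_⟩
  -- Step 2 : Y = 0
  have key' : ∀ t, Y 0 * deriv γ t 1 = Y 1 * deriv γ t 0 := by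
    intro t
    have := key t
    rw [ha] at this
    simpa using this
  have hF : ∀ t, HasDerivAt (fun s => Y 0 * γ s 0 + Y 1 * γ s 1)
      (Y 0 * deriv γ t 0 + Y 1 * deriv γ t 1) t :=
    fun t => ((hγi 0 t).const_mul (Y 0)).add ((hγi 1 t).const_mul (Y 1))
  have hFper : Y 0 * γ 0 0 + Y 1 * γ 0 1 = Y 0 * γ L 0 + Y 1 * γ L 1 := by rw [hγL]
  obtain ⟨c', _, hc'⟩ := exists_deriv_eq_zero hL
    (fun t _ => (hF t).differentiableAt.continuousAt.continuousWithinAt) hFper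
  rw [(hF c').deriv] at hc'
  have e2 := key' c'
  have h0 : (Y 0 ^ 2 + Y 1 ^ 2) * deriv γ c' 0 = 0 := by linear_combination Y 0 * hc' - Y 1 * e2
  have h1 : (Y 0 ^ 2 + Y 1 ^ 2) * deriv γ c' 1 = 0 := by linear_combination Y 1 * hc' + Y 0 * e2
  by_cases hY : Y 0 ^ 2 + Y 1 ^ 2 = 0
  · have hY0 : Y 0 = 0 := by nlinarith [sq_nonneg (Y 0), sq_nonneg (Y 1)]
    have hY1 : Y 1 = 0 := by nlinarith [sq_nonneg (Y 0), sq_nonneg (Y 1)]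
    ext i
    fin_cases i
    · simpa using hY0
    · simpa using hY1
  · exfalso
    apply hne c'
    have hv0 : deriv γ c' 0 = 0 := by
      rcases mul_eq_zero.mp h0 with h' | h'
      · exact absurd h' hY
      · exact h'
    have hv1 : deriv γ c' 1 = 0 := by
      rcases mul_eq_zero.mp h1 with h' | h'
      · exact absurd h' hY
      · exact h'
    ext i
    fin_cases i
    · simpa using hv0
    · simpa using hv1
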